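/- arXiv:1411.3363 — 5 statements merged into one kernel-verified Lean document; each statement's English description precedes it below -/
import Mathlib

section
/- Let n ≥ 3, let g be a symmetric invertible n×n real matrix with inverse matrix G, let R : Fin n → Fin n → Fin n → Fin n → ℝ be a (0,4)-tensor and S : Fin n → Fin n → ℝ a (0,2)-tensor. Define the (0,4)-tensor R̄ by R̄ m i j k = R m i j k + g m k * S i j − g m j * S i k + g i j * S m k − g i k * S m j. Define the Ricci contraction of a (0,4)-tensor T by Ric(T) i j = Σ_{m,k} G m k * T m i j k, its scalar by sc(T) = Σ_{i,j} G i j * Ric(T) i j, and its concircular tensor by Z(T) m i j k = T m i j k − (sc(T)/(n*(n−1))) * (g m k * g i j − g m j * g i k). Then Z(R̄) = Z(R) (as (0,4)-tensors) if and only if there exists β : ℝ such that S i j = β * g i j for all i, j. -/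
/-!
Since `R̄ = R + g ⊙ S` (Kulkarni–Nomizu product) and `Z` is linear, `Z(R̄) = Z(R)` iff
`Z(g ⊙ S) = 0`. The Ricci contraction of `g ⊙ S` is `(n - 2) S + (tr S) g`, and its scalar is
`2 (n - 1) tr S`. If `Z(g ⊙ S) = 0`, then `g ⊙ S` is a multiple of `g_mk g_ij - g_mj g_ik`, whose
Ricci contraction is `(n - 1) g`; so `(n - 2) S` is a multiple of `g`, and `n ≠ 2` gives `S = β g`.
Conversely, for `S = β g` one has `g ⊙ S = 2 β (g_mk g_ij - g_mj g_ik)`, which is exactly the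
scalar correction `2 β`.
-/

/-- Ricci contraction of a (0,4)-tensor: `Ric(T) i j = Σ_{m,k} G m k * T m i j k`. -/
noncomputable def ricci04 {n : ℕ} (G : Fin n → Fin n → ℝ)
    (T : Fin n → Fin n → Fin n → Fin n → ℝ) (i j : Fin n) : ℝ :=
  ∑ m, ∑ k, G m k * T m i j k

/-- Scalar of a (0,4)-tensor: `sc(T) = Σ_{i,j} G i j * Ric(T) i j`. -/
noncomputable def scalar04 {n : ℕ} (G : Fin n → Fin n → ℝ)
    (T : Fin n → Fin n → Fin n → Fin n → ℝ) : ℝ :=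
  ∑ i, ∑ j, G i j * ricci04 G T i j

/-- Concircular curvature tensor of a (0,4)-tensor. -/
noncomputable def concirc04 {n : ℕ} (g G : Fin n → Fin n → ℝ)
    (T : Fin n → Fin n → Fin n → Fin n → ℝ) (m i j k : Fin n) : ℝ :=
  T m i j k - (scalar04 G T / ((n : ℝ) * ((n : ℝ) - 1))) *
    (g m k * g i j - g m j * g i k)

section Contraction

variable {ι : Type*} [Fintype ι]

noncomputable def gContract (G T : ι → ι → ℝ) : ℝ :=
  ∑ m, ∑ k, G m k * T m k

/-- The Kulkarni–Nomizu product `h ⊙ s`; in this notation `R̄ = R + g ⊙ S`. -/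
def kulkarniNomizu (h s : ι → ι → ℝ) (m i j k : ι) : ℝ :=
  h m k * s i j + h i j * s m k - h m j * s i k - h i k * s m j

variable {G : ι → ι → ℝ}

theorem gContract_add (T U : ι → ι → ℝ) :
    gContract G (fun m k => T m k + U m k) = gContract G T + gContract G U := by
  simp only [gContract, mul_add, Finset.sum_add_distrib]

theorem gContract_sub (T U : ι → ι → ℝ) :
    gContract G (fun m k => T m k - U m k) = gContract G T - gContract G U := by
  simp only [gContract, mul_sub, Finset.sum_sub_distrib]

theorem gContract_const_mul (c : ℝ) (T : ι → ι → ℝ) :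
    gContract G (fun m k => c * T m k) = c * gContract G T := by
  simp only [gContract, Finset.mul_sum]
  exact Finset.sum_congr rfl fun _ _ => Finset.sum_congr rfl fun _ _ => by ring

variable [DecidableEq ι] {g : ι → ι → ℝ}

theorem gContract_self (hsymm : ∀ i j, g i j = g j i)
    (hGg : ∀ i j, (∑ k, G i k * g k j) = if i = j then (1 : ℝ) else 0) :
    gContract G g = Fintype.card ι := by
  have hdiag : ∀ m, ∑ k, G m k * g m k = 1 := fun m => by
    simpa [hsymm m] using hGg m m
  simp [gContract, hdiag]

theorem gContract_mul_const (hsymm : ∀ i j, g i j = g j i)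
    (hGg : ∀ i j, (∑ k, G i k * g k j) = if i = j then (1 : ℝ) else 0) (c : ℝ) :
    gContract G (fun m k => g m k * c) = Fintype.card ι * c := by
  simp only [mul_comm _ c, gContract_const_mul, gContract_self hsymm hGg]

theorem gContract_metric_left (hsymm : ∀ i j, g i j = g j i)
    (hgG : ∀ i j, (∑ k, g i k * G k j) = if i = j then (1 : ℝ) else 0) (f : ι → ℝ) (j : ι) :
    gContract G (fun m k => g m j * f k) = f j := by
  rw [gContract, Finset.sum_comm]
  calc ∑ k, ∑ m, G m k * (g m j * f k) = ∑ k, (∑ m, g j m * G m k) * f k := by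
        simp only [Finset.sum_mul, hsymm _ j]
        exact Finset.sum_congr rfl fun _ _ => Finset.sum_congr rfl fun _ _ => by ring
    _ = f j := by simp [hgG]

theorem gContract_metric_right (hsymm : ∀ i j, g i j = g j i)
    (hGg : ∀ i j, (∑ k, G i k * g k j) = if i = j then (1 : ℝ) else 0) (f : ι → ℝ) (i : ι) :
    gContract G (fun m k => g i k * f m) = f i := by
  calc gContract G (fun m k => g i k * f m) = ∑ m, (∑ k, G m k * g k i) * f m := by
        simp only [gContract, Finset.sum_mul, hsymm i]
        exact Finset.sum_congr rfl fun _ _ => Finset.sum_congr rfl fun _ _ => by ring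
    _ = f i := by simp [hGg]

theorem gContract_kulkarniNomizu (hsymm : ∀ i j, g i j = g j i)
    (hgG : ∀ i j, (∑ k, g i k * G k j) = if i = j then (1 : ℝ) else 0)
    (hGg : ∀ i j, (∑ k, G i k * g k j) = if i = j then (1 : ℝ) else 0) (S : ι → ι → ℝ) (i j : ι) :
    gContract G (fun m k => kulkarniNomizu g S m i j k)
      = (Fintype.card ι - 2) * S i j + gContract G S * g i j := by
  simp only [kulkarniNomizu, gContract_sub, gContract_add, gContract_const_mul,
    gContract_mul_const hsymm hGg, gContract_metric_left hsymm hgG (S i),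
    gContract_metric_right hsymm hGg (S · j)]
  ring

end Contraction

section Concircular

variable {n : ℕ} {g G : Fin n → Fin n → ℝ}

theorem ricci04_eq_gContract (T : Fin n → Fin n → Fin n → Fin n → ℝ) (i j : Fin n) :
    ricci04 G T i j = gContract G (fun m k => T m i j k) := rfl

theorem scalar04_eq_gContract (T : Fin n → Fin n → Fin n → Fin n → ℝ) :
    scalar04 G T = gContract G (ricci04 G T) := rfl

theorem concirc04_add (T U : Fin n → Fin n → Fin n → Fin n → ℝ) (m i j k : Fin n) :
    concirc04 g G (fun m i j k => T m i j k + U m i j k) m i j k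
      = concirc04 g G T m i j k + concirc04 g G U m i j k := by
  have hricci : ricci04 G (fun m i j k => T m i j k + U m i j k)
      = fun i j => ricci04 G T i j + ricci04 G U i j := by
    funext i j
    exact gContract_add _ _
  have hscalar : scalar04 G (fun m i j k => T m i j k + U m i j k)
      = scalar04 G T + scalar04 G U := by
    rw [scalar04_eq_gContract, hricci, gContract_add]
    rfl
  simp only [concirc04, hscalar]
  ring

theorem scalar04_kulkarniNomizu (hsymm : ∀ i j, g i j = g j i)
    (hgG : ∀ i j, (∑ k, g i k * G k j) = if i = j then (1 : ℝ) else 0)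
    (hGg : ∀ i j, (∑ k, G i k * g k j) = if i = j then (1 : ℝ) else 0) (S : Fin n → Fin n → ℝ) :
    scalar04 G (kulkarniNomizu g S) = 2 * ((n : ℝ) - 1) * gContract G S := by
  have hricci : ricci04 G (kulkarniNomizu g S)
      = fun i j => ((n : ℝ) - 2) * S i j + gContract G S * g i j := by
    funext i j
    rw [ricci04_eq_gContract, gContract_kulkarniNomizu hsymm hgG hGg, Fintype.card_fin]
  rw [scalar04_eq_gContract, hricci, gContract_add, gContract_const_mul, gContract_const_mul,
    gContract_self hsymm hGg, Fintype.card_fin]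
  ring

theorem concirc04_kulkarniNomizu_eq_zero_iff (hn : 3 ≤ n) (hsymm : ∀ i j, g i j = g j i)
    (hgG : ∀ i j, (∑ k, g i k * G k j) = if i = j then (1 : ℝ) else 0)
    (hGg : ∀ i j, (∑ k, G i k * g k j) = if i = j then (1 : ℝ) else 0) (S : Fin n → Fin n → ℝ) :
    (∀ m i j k, concirc04 g G (kulkarniNomizu g S) m i j k = 0) ↔
      ∃ β : ℝ, ∀ i j, S i j = β * g i j := by
  have hn3 : (3 : ℝ) ≤ n := by exact_mod_cast hn
  have hn1 : (n : ℝ) - 1 ≠ 0 := by linarith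
  have hn2 : (n : ℝ) - 2 ≠ 0 := by linarith
  constructor
  · intro hZ
    set c := scalar04 G (kulkarniNomizu g S) / ((n : ℝ) * ((n : ℝ) - 1))
    refine ⟨(c * ((n : ℝ) - 1) - gContract G S) / ((n : ℝ) - 2), fun i j => ?_⟩
    have hricci : ((n : ℝ) - 2) * S i j + gContract G S * g i j = c * (((n : ℝ) - 1) * g i j) := by
      have hKN : (fun m k => kulkarniNomizu g S m i j k)
          = fun m k => c * (g m k * g i j - g m j * g i k) := by
        funext m k
        exact sub_eq_zero.mp (hZ m i j k)
      have := gContract_kulkarniNomizu hsymm hgG hGg S i j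
      rw [hKN, gContract_const_mul, gContract_sub, gContract_mul_const hsymm hGg,
        gContract_metric_left hsymm hgG (g i)] at this
      simp only [Fintype.card_fin] at this
      linarith
    rw [div_mul_eq_mul_div, eq_div_iff hn2]
    linarith
  · rintro ⟨β, hS⟩ m i j k
    obtain rfl : S = fun i j => β * g i j := funext₂ hS
    have htrace : gContract G (fun i j => β * g i j) = β * n := by
      rw [gContract_const_mul, gContract_self hsymm hGg, Fintype.card_fin]
    rw [concirc04, scalar04_kulkarniNomizu hsymm hgG hGg, htrace, kulkarniNomizu]
    field_simp
    ring

end Concircular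

/-- Theorem 4.2: the semi-symmetric non-metric connection is S-concircular
iff the concircular curvature tensors of `∇` and `∇̄` coincide. -/
theorem stmt_0 (n : ℕ) (hn : 3 ≤ n) (g G : Fin n → Fin n → ℝ)
    (hsymm : ∀ i j, g i j = g j i)
    (hgG : ∀ i j, (∑ k, g i k * G k j) = if i = j then (1 : ℝ) else 0)
    (hGg : ∀ i j, (∑ k, G i k * g k j) = if i = j then (1 : ℝ) else 0)
    (R : Fin n → Fin n → Fin n → Fin n → ℝ)
    (S : Fin n → Fin n → ℝ)
    (Rbar : Fin n → Fin n → Fin n → Fin n → ℝ)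
    (hRbar : ∀ m i j k, Rbar m i j k =
      R m i j k + g m k * S i j - g m j * S i k + g i j * S m k - g i k * S m j) :
    (∀ m i j k, concirc04 g G Rbar m i j k = concirc04 g G R m i j k) ↔
      ∃ β : ℝ, ∀ i j, S i j = β * g i j := by
  obtain rfl : Rbar = fun m i j k => R m i j k + kulkarniNomizu g S m i j k := by
    funext m i j k
    rw [hRbar, kulkarniNomizu]
    ring
  simp only [concirc04_add, add_eq_left]
  exact concirc04_kulkarniNomizu_eq_zero_iff hn hsymm hgG hGg S
end

section
/- Let n ≥ 2, let g be a symmetric invertible n×n real matrix with inverse matrix G, let R : Fin n → Fin n → Fin n → Fin n → ℝ be a (0,4)-tensor, and let β : ℝ. Define S i j = β * g i j and R̄ m i j k = R m i j k + g m k * S i j − g m j * S i k + g i j * S m k − g i k * S m j. Define the Ricci contraction of a (0,4)-tensor T by Ric(T) i j = Σ_{m,k} G m k * T m i j k, its scalar by sc(T) = Σ_{i,j} G i j * Ric(T) i j, and its concircular tensor by Z(T) m i j k = T m i j k − (sc(T)/(n*(n−1))) * (g m k * g i j − g m j * g i k). Then Z(R̄) m i j k = Z(R) m i j k for all indices m,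 i, j, k. -/
/-! `R̄ - R = 2β (g_{mk} g_{ij} - g_{mj} g_{ik})` is a multiple of the curvature tensor of a
space of constant curvature, whose scalar curvature is `n (n - 1)`. Adding `c` times that tensor
therefore raises the scalar curvature by `c n (n - 1)`, so the concircular tensor subtracts exactly
the added term again and is unchanged. -/

open Finset

variable {n : ℕ} {g G : Fin n → Fin n → ℝ}

def constCurv04 (g : Fin n → Fin n → ℝ) (m i j k : Fin n) : ℝ :=
  g m k * g i j - g m j * g i k

theorem ricci04_add_smul (T U : Fin n → Fin n → Fin n → Fin n → ℝ) (c : ℝ) (i j : Fin n) :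
    ricci04 G (T + c • U) i j = ricci04 G T i j + c * ricci04 G U i j := by
  simp only [ricci04, Pi.add_apply, Pi.smul_apply, smul_eq_mul, mul_add, sum_add_distrib,
    mul_sum, mul_left_comm _ c]

theorem scalar04_add_smul (T U : Fin n → Fin n → Fin n → Fin n → ℝ) (c : ℝ) :
    scalar04 G (T + c • U) = scalar04 G T + c * scalar04 G U := by
  simp only [scalar04, ricci04_add_smul, mul_add, sum_add_distrib, mul_sum, mul_left_comm _ c]

section InverseMetric

variable (hsymm : ∀ i j, g i j = g j i)
  (hGg : ∀ i j, (∑ k, G i k * g k j) = if i = j then (1 : ℝ) else 0)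
include hsymm hGg

theorem sum_sum_inv_mul_metric : ∑ m, ∑ k, G m k * g m k = n := by
  have hdiag : ∀ m, ∑ k, G m k * g m k = 1 := fun m => by
    simpa [hsymm m] using hGg m m
  simp [hdiag]

theorem sum_sum_inv_mul_metric_mul_metric (i j : Fin n) :
    ∑ m, ∑ k, G m k * g m j * g i k = g i j := by
  calc ∑ m, ∑ k, G m k * g m j * g i k
      = ∑ m, g j m * ∑ k, G m k * g k i := by
        refine sum_congr rfl fun m _ => ?_
        rw [mul_sum]
        refine sum_congr rfl fun k _ => ?_
        rw [hsymm m j, hsymm i k]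
        ring
    _ = g j i := by simp [hGg]
    _ = g i j := hsymm j i

theorem ricci04_constCurv04 (i j : Fin n) : ricci04 G (constCurv04 g) i j = (n - 1) * g i j := by
  simp only [ricci04, constCurv04, mul_sub, sum_sub_distrib, ← mul_assoc, ← sum_mul,
    sum_sum_inv_mul_metric hsymm hGg, sum_sum_inv_mul_metric_mul_metric hsymm hGg]
  ring

theorem scalar04_constCurv04 : scalar04 G (constCurv04 g) = n * (n - 1) := by
  simp only [scalar04, ricci04_constCurv04 hsymm hGg, mul_left_comm _ ((n : ℝ) - 1), ← mul_sum,
    sum_sum_inv_mul_metric hsymm hGg]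
  ring

theorem concirc04_add_smul_constCurv04 (hn : (n : ℝ) * (n - 1) ≠ 0)
    (T : Fin n → Fin n → Fin n → Fin n → ℝ) (c : ℝ) (m i j k : Fin n) :
    concirc04 g G (T + c • constCurv04 g) m i j k = concirc04 g G T m i j k := by
  simp only [concirc04, scalar04_add_smul, scalar04_constCurv04 hsymm hGg, Pi.add_apply,
    Pi.smul_apply, smul_eq_mul, constCurv04]
  rw [add_div, mul_div_cancel_right₀ c hn]
  ring

end InverseMetric

theorem stmt_2_general (n : ℕ) (hn : 2 ≤ n) (g G : Fin n → Fin n → ℝ)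
    (hsymm : ∀ i j, g i j = g j i)
    (hGg : ∀ i j, (∑ k, G i k * g k j) = if i = j then (1 : ℝ) else 0)
    (R : Fin n → Fin n → Fin n → Fin n → ℝ)
    (β : ℝ) (S : Fin n → Fin n → ℝ)
    (hS : ∀ i j, S i j = β * g i j)
    (Rbar : Fin n → Fin n → Fin n → Fin n → ℝ)
    (hRbar : ∀ m i j k, Rbar m i j k =
      R m i j k + g m k * S i j - g m j * S i k + g i j * S m k - g i k * S m j) :
    ∀ m i j k, concirc04 g G Rbar m i j k = concirc04 g G R m i j k := by
  have hRbar_eq : Rbar = R + (2 * β) • constCurv04 g := by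
    funext m i j k
    simp only [hRbar, hS, Pi.add_apply, Pi.smul_apply, smul_eq_mul, constCurv04]
    ring
  have hdim : (n : ℝ) * (n - 1) ≠ 0 := by
    have : (2 : ℝ) ≤ n := by exact_mod_cast hn
    exact mul_ne_zero (by linarith) (by linarith)
  intro m i j k
  rw [hRbar_eq]
  exact concirc04_add_smul_constCurv04 hsymm hGg hdim R (2 * β) m i j k

/-- Sufficiency half of Theorem 4.2: if `S_{ij} = β g_{ij}` then the concircular
curvature tensors of `∇` and `∇̄` coincide. -/
theorem stmt_2 (n : ℕ) (hn : 2 ≤ n) (g G : Fin n → Fin n → ℝ)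
    (hsymm : ∀ i j, g i j = g j i)
    (hgG : ∀ i j, (∑ k, g i k * G k j) = if i = j then (1 : ℝ) else 0)
    (hGg : ∀ i j, (∑ k, G i k * g k j) = if i = j then (1 : ℝ) else 0)
    (R : Fin n → Fin n → Fin n → Fin n → ℝ)
    (β : ℝ) (S : Fin n → Fin n → ℝ)
    (hS : ∀ i j, S i j = β * g i j)
    (Rbar : Fin n → Fin n → Fin n → Fin n → ℝ)
    (hRbar : ∀ m i j k, Rbar m i j k =
      R m i j k + g m k * S i j - g m j * S i k + g i j * S m k - g i k * S m j) :
    ∀ m i j k, concirc04 g G Rbar m i j k = concirc04 g G R m i j k :=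
  stmt_2_general n hn g G hsymm hGg R β S hS Rbar hRbar
end

section
/- Let n ≥ 2, let g be a symmetric invertible n×n real matrix with inverse matrix G, let R : Fin n → Fin n → Fin n → Fin n → ℝ be a (1,3)-tensor (first index contravariant) and S : Fin n → Fin n → ℝ a (0,2)-tensor. Define R̄ h i j k = R h i j k + (if h = k then 1 else 0) * S i j − (if h = j then 1 else 0) * S i k + g i j * (Σ_r G h r * S r k) − g i k * (Σ_r G h r * S r j). For a (1,3)-tensor T define Ric(T) i j = Σ_k T k i j k, sc(T) = Σ_{i,j} G i j * Ric(T) i j, and Z(T) h i j k = T h i j k − (sc(T)/(n*(n−1))) * ((if h = k then 1 else 0) * g i j − (if h = j then 1 else 0) * g i k). Let trS = Σ_{m,k} G m k * S m k. Then for all indices h, i, j, k: Z(R̄) h i j k = Z(R) h i j k + (if h = k then 1 else 0) * S i j − (if h = j then 1 else 0) * S i k + g i j * (Σ_m G h m * S m k) − g i k * (Σ_m G h m * S m j) − (2*trS/n) * ((if h = k then 1 else 0) * g i j − (if h = j then 1 else 0) * g i k). -/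
/-!
Both `Ric` and `sc` are linear in the curvature tensor, so with `D = R̄ - R` one gets
`Z̄ = Z + D - sc(D) / (n (n - 1)) · (δ^h_k g_{ij} - δ^h_j g_{ik})`. Contracting `D`, with the
symmetry of `g^{ij}` inherited from `g_{ij}`, gives `Ric(D)_{ij} = (n - 2) S_{ij} + g_{ij} tr S`
and `sc(D) = 2 (n - 1) tr S`, where `tr S = g^{ij} S_{ij}`; so the coefficient is `2 tr S / n`.
-/

/-- Ricci contraction of a (1,3)-tensor: `Ric(T) i j = Σ_k T k i j k`. -/
noncomputable def ricci13 {n : ℕ}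
    (T : Fin n → Fin n → Fin n → Fin n → ℝ) (i j : Fin n) : ℝ :=
  ∑ k, T k i j k

/-- Scalar of a (1,3)-tensor: `sc(T) = Σ_{i,j} G i j * Ric(T) i j`. -/
noncomputable def scalar13 {n : ℕ} (G : Fin n → Fin n → ℝ)
    (T : Fin n → Fin n → Fin n → Fin n → ℝ) : ℝ :=
  ∑ i, ∑ j, G i j * ricci13 T i j

/-- Concircular curvature tensor of a (1,3)-tensor. -/
noncomputable def concirc13 {n : ℕ} (g G : Fin n → Fin n → ℝ)
    (T : Fin n → Fin n → Fin n → Fin n → ℝ) (h i j k : Fin n) : ℝ :=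
  T h i j k - (scalar13 G T / ((n : ℝ) * ((n : ℝ) - 1))) *
    ((if h = k then (1 : ℝ) else 0) * g i j - (if h = j then (1 : ℝ) else 0) * g i k)

/-- `R̄^h_{ijk} - R^h_{ijk}`. -/
def curvatureDeformation {n : ℕ} (g G S : Fin n → Fin n → ℝ) (h i j k : Fin n) : ℝ :=
  (if h = k then (1 : ℝ) else 0) * S i j - (if h = j then (1 : ℝ) else 0) * S i k
    + g i j * (∑ r, G h r * S r k) - g i k * (∑ r, G h r * S r j)

theorem symm_of_mul_eq_delta_of_symm {n : ℕ} {g G : Fin n → Fin n → ℝ}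
    (hsymm : ∀ i j, g i j = g j i)
    (hgG : ∀ i j, (∑ k, g i k * G k j) = if i = j then (1 : ℝ) else 0) (a b : Fin n) :
    G a b = G b a := by
  have hmul : Matrix.of g * Matrix.of G = 1 := by
    ext i j
    simp [Matrix.mul_apply, hgG, Matrix.one_apply]
  have hinv : (Matrix.of g)⁻¹ = Matrix.of G := Matrix.inv_eq_right_inv hmul
  have hg : (Matrix.of g).IsSymm := Matrix.IsSymm.ext fun i j => hsymm j i
  have := congrFun₂ (hinv ▸ hg.inv) a b
  simpa using this.symm

theorem sum_metric_mul_sum_inv_mul {n : ℕ} {g G : Fin n → Fin n → ℝ}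
    (hgG : ∀ i j, (∑ k, g i k * G k j) = if i = j then (1 : ℝ) else 0)
    (S : Fin n → Fin n → ℝ) (i j : Fin n) :
    ∑ x, g i x * (∑ r, G x r * S r j) = S i j := by
  calc ∑ x, g i x * (∑ r, G x r * S r j)
      = ∑ r, (∑ x, g i x * G x r) * S r j := by
        simp only [Finset.mul_sum, Finset.sum_mul, mul_assoc]
        exact Finset.sum_comm
    _ = S i j := by simp [hgG]

theorem sum_sum_inv_mul_metric_eq_dim {n : ℕ} {g G : Fin n → Fin n → ℝ}
    (hGsymm : ∀ a b, G a b = G b a)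
    (hgG : ∀ i j, (∑ k, g i k * G k j) = if i = j then (1 : ℝ) else 0) :
    ∑ i, ∑ j, G i j * g i j = n := by
  calc ∑ i, ∑ j, G i j * g i j = ∑ i, ∑ j, g i j * G j i := by
        simp only [hGsymm _ _, mul_comm]
    _ = n := by simp [hgG]

theorem scalar13_add {n : ℕ} (G : Fin n → Fin n → ℝ)
    (T D : Fin n → Fin n → Fin n → Fin n → ℝ) :
    scalar13 G (T + D) = scalar13 G T + scalar13 G D := by
  simp only [scalar13, ricci13, Pi.add_apply, Finset.sum_add_distrib, mul_add]

theorem concirc13_add {n : ℕ} (g G : Fin n → Fin n → ℝ)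
    (T D : Fin n → Fin n → Fin n → Fin n → ℝ) (h i j k : Fin n) :
    concirc13 g G (T + D) h i j k = concirc13 g G T h i j k + D h i j k
      - (scalar13 G D / ((n : ℝ) * ((n : ℝ) - 1))) *
        ((if h = k then (1 : ℝ) else 0) * g i j - (if h = j then (1 : ℝ) else 0) * g i k) := by
  simp only [concirc13, scalar13_add, Pi.add_apply]
  ring

section Deformation

variable {n : ℕ} {g G : Fin n → Fin n → ℝ}

theorem ricci13_curvatureDeformation (hGsymm : ∀ a b, G a b = G b a)
    (hgG : ∀ i j, (∑ k, g i k * G k j) = if i = j then (1 : ℝ) else 0)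
    (S : Fin n → Fin n → ℝ) (i j : Fin n) :
    ricci13 (curvatureDeformation g G S) i j
      = ((n : ℝ) - 2) * S i j + g i j * ∑ a, ∑ b, G a b * S a b := by
  have htrace : ∑ k, ∑ r, G k r * S r k = ∑ a, ∑ b, G a b * S a b := by
    rw [Finset.sum_comm]
    simp only [hGsymm _ _]
  simp only [ricci13, curvatureDeformation, Finset.sum_add_distrib, Finset.sum_sub_distrib,
    ← Finset.mul_sum, htrace, sum_metric_mul_sum_inv_mul hgG]
  simp only [↓reduceIte, Finset.sum_const, Finset.card_univ, Fintype.card_fin, nsmul_eq_mul,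
    one_mul, ite_mul, zero_mul, Finset.sum_ite_eq', Finset.mem_univ]
  ring

theorem scalar13_curvatureDeformation (hGsymm : ∀ a b, G a b = G b a)
    (hgG : ∀ i j, (∑ k, g i k * G k j) = if i = j then (1 : ℝ) else 0)
    (S : Fin n → Fin n → ℝ) :
    scalar13 G (curvatureDeformation g G S) = (2 * (n : ℝ) - 2) * ∑ a, ∑ b, G a b * S a b := by
  simp only [scalar13, ricci13_curvatureDeformation hGsymm hgG, mul_add, Finset.sum_add_distrib]
  set t := ∑ a, ∑ b, G a b * S a b
  calc _ = ((n : ℝ) - 2) * t + (∑ i, ∑ j, G i j * g i j) * t := by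
        congr 1
        · simp only [t, Finset.mul_sum, mul_left_comm]
        · simp only [Finset.sum_mul, mul_assoc]
    _ = (2 * (n : ℝ) - 2) * t := by
        rw [sum_sum_inv_mul_metric_eq_dim hGsymm hgG]
        ring

end Deformation

theorem stmt_9_general (n : ℕ) (hn : 2 ≤ n) (g G : Fin n → Fin n → ℝ)
    (hsymm : ∀ i j, g i j = g j i)
    (hgG : ∀ i j, (∑ k, g i k * G k j) = if i = j then (1 : ℝ) else 0)
    (R : Fin n → Fin n → Fin n → Fin n → ℝ)
    (S : Fin n → Fin n → ℝ)
    (Rbar : Fin n → Fin n → Fin n → Fin n → ℝ)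
    (hRbar : ∀ h i j k, Rbar h i j k =
      R h i j k + (if h = k then (1 : ℝ) else 0) * S i j
        - (if h = j then (1 : ℝ) else 0) * S i k
        + g i j * (∑ r, G h r * S r k) - g i k * (∑ r, G h r * S r j)) :
    ∀ h i j k, concirc13 g G Rbar h i j k =
      concirc13 g G R h i j k
        + (if h = k then (1 : ℝ) else 0) * S i j
        - (if h = j then (1 : ℝ) else 0) * S i k
        + g i j * (∑ m, G h m * S m k) - g i k * (∑ m, G h m * S m j)
        - (2 * (∑ m, ∑ k', G m k' * S m k') / (n : ℝ)) *
            ((if h = k then (1 : ℝ) else 0) * g i j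
              - (if h = j then (1 : ℝ) else 0) * g i k) := by
  intro h i j k
  have hGsymm := symm_of_mul_eq_delta_of_symm hsymm hgG
  have hRbar' : Rbar = R + curvatureDeformation g G S := by
    ext h i j k
    simp only [hRbar, Pi.add_apply, curvatureDeformation]
    ring
  have hn₁ : (n : ℝ) - 1 ≠ 0 := by
    have : (2 : ℝ) ≤ n := by exact_mod_cast hn
    linarith
  have hcoeff : ∀ t : ℝ, (2 * (n : ℝ) - 2) * t / ((n : ℝ) * ((n : ℝ) - 1)) = 2 * t / n := by
    intro t
    field_simp
  rw [hRbar', concirc13_add, scalar13_curvatureDeformation hGsymm hgG, hcoeff]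
  simp only [curvatureDeformation]
  ring

/-- Equation (2.9): the relation between the concircular curvature tensors
`Z^h_{ijk}` and `Z̄^h_{ijk}` of `∇` and `∇̄`. -/
theorem stmt_9 (n : ℕ) (hn : 2 ≤ n) (g G : Fin n → Fin n → ℝ)
    (hsymm : ∀ i j, g i j = g j i)
    (hgG : ∀ i j, (∑ k, g i k * G k j) = if i = j then (1 : ℝ) else 0)
    (hGg : ∀ i j, (∑ k, G i k * g k j) = if i = j then (1 : ℝ) else 0)
    (R : Fin n → Fin n → Fin n → Fin n → ℝ)
    (S : Fin n → Fin n → ℝ)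
    (Rbar : Fin n → Fin n → Fin n → Fin n → ℝ)
    (hRbar : ∀ h i j k, Rbar h i j k =
      R h i j k + (if h = k then (1 : ℝ) else 0) * S i j
        - (if h = j then (1 : ℝ) else 0) * S i k
        + g i j * (∑ r, G h r * S r k) - g i k * (∑ r, G h r * S r j)) :
    ∀ h i j k, concirc13 g G Rbar h i j k =
      concirc13 g G R h i j k
        + (if h = k then (1 : ℝ) else 0) * S i j
        - (if h = j then (1 : ℝ) else 0) * S i k
        + g i j * (∑ m, G h m * S m k) - g i k * (∑ m, G h m * S m j)
        - (2 * (∑ m, ∑ k', G m k' * S m k') / (n : ℝ)) *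
            ((if h = k then (1 : ℝ) else 0) * g i j
              - (if h = j then (1 : ℝ) else 0) * g i k) :=
  stmt_9_general n hn g G hsymm hgG R S Rbar hRbar
end

section
/- Let n ≥ 2, let g be a symmetric invertible n×n real matrix with inverse matrix G, let R : Fin n → Fin n → Fin n → Fin n → ℝ be a (0,4)-tensor and S : Fin n → Fin n → ℝ a (0,2)-tensor. Define R̄ m i j k = R m i j k + g m k * S i j − g m j * S i k + g i j * S m k − g i k * S m j. For a (0,4)-tensor T define Ric(T) i j = Σ_{m,k} G m k * T m i j k, sc(T) = Σ_{i,j} G i j * Ric(T) i j, Z(T) m i j k = T m i j k − (sc(T)/(n*(n−1))) * (g m k * g i j − g m j * g i k), and Ric(Z(T)) i j = Σ_{m,k} G m k * Z(T) m i j k. Let trS = Σ_{m,k} G m k * S m k. Then for all i, j: Ric(Z(R̄)) i j = Ric(Z(R)) i j + (n−2) * S i j − ((n−2)/n) * trS * g i j. -/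
open Finset

section Contraction

variable {ι α : Type*} [Fintype ι] [DecidableEq ι] [CommRing α] {g G : ι → ι → α}

theorem sum_mul_eq_ite_of_sum_mul_eq_ite
    (hGg : ∀ i j, ∑ k, G i k * g k j = if i = j then 1 else 0) :
    ∀ i j, ∑ k, g i k * G k j = if i = j then 1 else 0 := by
  have hinv : Matrix.of G * Matrix.of g = 1 := by
    ext i j
    simpa [Matrix.mul_apply, Matrix.one_apply] using hGg i j
  have hinv' : Matrix.of g * Matrix.of G = 1 := mul_eq_one_comm.mp hinv
  intro i j
  simpa [Matrix.mul_apply, Matrix.one_apply] using congrFun₂ hinv' i j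

theorem sum_sum_inv_mul_self (hg : ∀ i j, g i j = g j i)
    (hGg : ∀ i j, ∑ k, G i k * g k j = if i = j then 1 else 0) :
    ∑ m, ∑ k, G m k * g m k = Fintype.card ι := by
  have hdiag (m : ι) : ∑ k, G m k * g m k = 1 := by simpa [hg m] using hGg m m
  simp [hdiag]

theorem sum_sum_inv_mul_fst (hg : ∀ i j, g i j = g j i)
    (hgG : ∀ i j, ∑ k, g i k * G k j = if i = j then 1 else 0) (f : ι → α) (a : ι) :
    ∑ m, ∑ k, G m k * g m a * f k = f a := by
  rw [sum_comm]
  simp_rw [← sum_mul, mul_comm (G _ _), hg _ a, hgG]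
  simp

theorem sum_sum_inv_mul_snd
    (hGg : ∀ i j, ∑ k, G i k * g k j = if i = j then 1 else 0) (f : ι → α) (a : ι) :
    ∑ m, ∑ k, G m k * g k a * f m = f a := by
  simp_rw [← sum_mul, hGg]
  simp

end Contraction

/-- The tensor `R̄` of the paper: the curvature of the semi-symmetric non-metric connection. -/
def semiSymmetricCurv {n : ℕ} (g S : Fin n → Fin n → ℝ) (R : Fin n → Fin n → Fin n → Fin n → ℝ)
    (m i j k : Fin n) : ℝ :=
  R m i j k + g m k * S i j - g m j * S i k + g i j * S m k - g i k * S m j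

section Curvature

variable {n : ℕ} {g G : Fin n → Fin n → ℝ} (hg : ∀ i j, g i j = g j i)
  (hgG : ∀ i j, ∑ k, g i k * G k j = if i = j then 1 else 0)
  (hGg : ∀ i j, ∑ k, G i k * g k j = if i = j then 1 else 0)
include hg hgG hGg

theorem ricci04_concirc04 (T : Fin n → Fin n → Fin n → Fin n → ℝ) (i j : Fin n) :
    ricci04 G (concirc04 g G T) i j =
      ricci04 G T i j - scalar04 G T / (n * (n - 1)) * (n - 1) * g i j := by
  have hexpand (m k : Fin n) : G m k * concirc04 g G T m i j k =
      G m k * T m i j k - scalar04 G T / (n * (n - 1)) * g i j * (G m k * g m k)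
        + scalar04 G T / (n * (n - 1)) * (G m k * g m j * g i k) := by
    rw [concirc04]; ring
  simp only [ricci04, hexpand, sum_add_distrib, sum_sub_distrib, ← mul_sum]
  rw [sum_sum_inv_mul_self hg hGg, sum_sum_inv_mul_fst hg hgG (g i) j, Fintype.card_fin]
  ring

theorem ricci04_semiSymmetricCurv (S : Fin n → Fin n → ℝ)
    (R : Fin n → Fin n → Fin n → Fin n → ℝ) (i j : Fin n) :
    ricci04 G (semiSymmetricCurv g S R) i j =
      ricci04 G R i j + (n - 2) * S i j + (∑ m, ∑ k, G m k * S m k) * g i j := by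
  have hexpand (m k : Fin n) : G m k * semiSymmetricCurv g S R m i j k =
      G m k * R m i j k + S i j * (G m k * g m k) - G m k * g m j * S i k
        + g i j * (G m k * S m k) - G m k * g k i * S m j := by
    rw [semiSymmetricCurv, hg i k]; ring
  simp only [ricci04, hexpand, sum_add_distrib, sum_sub_distrib, ← mul_sum]
  rw [sum_sum_inv_mul_self hg hGg, sum_sum_inv_mul_fst hg hgG (S i) j,
    sum_sum_inv_mul_snd hGg (S · j) i, Fintype.card_fin]
  ring

theorem scalar04_semiSymmetricCurv (S : Fin n → Fin n → ℝ)
    (R : Fin n → Fin n → Fin n → Fin n → ℝ) :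
    scalar04 G (semiSymmetricCurv g S R) =
      scalar04 G R + 2 * (n - 1) * ∑ m, ∑ k, G m k * S m k := by
  simp only [scalar04, ricci04_semiSymmetricCurv hg hgG hGg, mul_add, sum_add_distrib,
    mul_left_comm (G _ _), ← mul_sum]
  rw [sum_sum_inv_mul_self hg hGg, Fintype.card_fin]
  ring

end Curvature

/-- For `n = 1` the factor `1 / (n (n - 1))` is Lean's `1 / 0 = 0`; the identity still holds. -/
theorem one_sub_two_mul_concirc_factor {n : ℕ} (hn : n ≠ 0) :
    1 - 2 * ((n : ℝ) - 1) * (1 / (n * (n - 1)) * (n - 1)) = -(((n : ℝ) - 2) / n) := by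
  have hn' : (n : ℝ) ≠ 0 := Nat.cast_ne_zero.mpr hn
  rcases eq_or_ne ((n : ℝ) - 1) 0 with h | h
  · rw [h, show (n : ℝ) = 1 by linarith]; norm_num
  · field_simp; ring

theorem stmt_11_general (n : ℕ) (g G : Fin n → Fin n → ℝ)
    (hsymm : ∀ i j, g i j = g j i)
    (hGg : ∀ i j, (∑ k, G i k * g k j) = if i = j then (1 : ℝ) else 0)
    (R : Fin n → Fin n → Fin n → Fin n → ℝ)
    (S : Fin n → Fin n → ℝ)
    (Rbar : Fin n → Fin n → Fin n → Fin n → ℝ)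
    (hRbar : ∀ m i j k, Rbar m i j k =
      R m i j k + g m k * S i j - g m j * S i k + g i j * S m k - g i k * S m j) :
    ∀ i j, ricci04 G (concirc04 g G Rbar) i j =
      ricci04 G (concirc04 g G R) i j + ((n : ℝ) - 2) * S i j
        - (((n : ℝ) - 2) / (n : ℝ)) * (∑ m, ∑ k, G m k * S m k) * g i j := by
  have hgG := sum_mul_eq_ite_of_sum_mul_eq_ite hGg
  obtain rfl : Rbar = semiSymmetricCurv g S R := by funext m i j k; exact hRbar m i j k
  intro i j
  rw [ricci04_concirc04 hsymm hgG hGg, ricci04_concirc04 hsymm hgG hGg,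
    ricci04_semiSymmetricCurv hsymm hgG hGg, scalar04_semiSymmetricCurv hsymm hgG hGg]
  linear_combination (∑ m, ∑ k, G m k * S m k) * g i j * one_sub_two_mul_concirc_factor i.pos.ne'

/-- Equation (2.11): `Z̄_{ij} = Z_{ij} + (n−2)S_{ij} − ((n−2)/n) S g_{ij}`. -/
theorem stmt_11 (n : ℕ) (hn : 2 ≤ n) (g G : Fin n → Fin n → ℝ)
    (hsymm : ∀ i j, g i j = g j i)
    (hgG : ∀ i j, (∑ k, g i k * G k j) = if i = j then (1 : ℝ) else 0)
    (hGg : ∀ i j, (∑ k, G i k * g k j) = if i = j then (1 : ℝ) else 0)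
    (R : Fin n → Fin n → Fin n → Fin n → ℝ)
    (S : Fin n → Fin n → ℝ)
    (Rbar : Fin n → Fin n → Fin n → Fin n → ℝ)
    (hRbar : ∀ m i j k, Rbar m i j k =
      R m i j k + g m k * S i j - g m j * S i k + g i j * S m k - g i k * S m j) :
    ∀ i j, ricci04 G (concirc04 g G Rbar) i j =
      ricci04 G (concirc04 g G R) i j + ((n : ℝ) - 2) * S i j
        - (((n : ℝ) - 2) / (n : ℝ)) * (∑ m, ∑ k, G m k * S m k) * g i j :=
  stmt_11_general n g G hsymm hGg R S Rbar hRbar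
end

section
/- Let n ≥ 2, let g be a symmetric invertible n×n real matrix with inverse matrix G, let R̄ : Fin n → Fin n → Fin n → Fin n → ℝ be a (1,3)-tensor (first index contravariant), let c : ℝ, and define R̄* h i j k = R̄ h i j k + 2*c * ((if h = k then 1 else 0) * g i j − (if h = j then 1 else 0) * g i k). For a (1,3)-tensor T define Ric(T) i j = Σ_k T k i j k, sc(T) = Σ_{i,j} G i j * Ric(T) i j, and Z(T) h i j k = T h i j k − (sc(T)/(n*(n−1))) * ((if h = k then 1 else 0) * g i j − (if h = j then 1 else 0) * g i k). Then Z(R̄*) h i j k = Z(R̄) h i j k for all indices h, i, j, k. -/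
open Finset

noncomputable def constCurvatureTensor {n : ℕ} (g : Fin n → Fin n → ℝ) (h i j k : Fin n) : ℝ :=
  (if h = k then (1 : ℝ) else 0) * g i j - (if h = j then (1 : ℝ) else 0) * g i k

section Linearity

variable {n : ℕ} (T S : Fin n → Fin n → Fin n → Fin n → ℝ) (a : ℝ)

theorem ricci13_add_smul (i j : Fin n) :
    ricci13 (T + a • S) i j = ricci13 T i j + a * ricci13 S i j := by
  simp only [ricci13, Pi.add_apply, Pi.smul_apply, smul_eq_mul, sum_add_distrib, mul_sum]

theorem scalar13_add_smul (G : Fin n → Fin n → ℝ) :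
    scalar13 G (T + a • S) = scalar13 G T + a * scalar13 G S := by
  simp only [scalar13, ricci13_add_smul, mul_add, mul_left_comm (G _ _) a, sum_add_distrib,
    ← mul_sum]

theorem concirc13_add_smul (g G : Fin n → Fin n → ℝ) :
    concirc13 g G (T + a • S) = concirc13 g G T + a • concirc13 g G S := by
  funext h i j k
  simp only [concirc13, scalar13_add_smul, Pi.add_apply, Pi.smul_apply, smul_eq_mul]
  ring

end Linearity

section ConstCurvature

variable {n : ℕ} (g G : Fin n → Fin n → ℝ)

theorem ricci13_constCurvatureTensor (i j : Fin n) :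
    ricci13 (constCurvatureTensor g) i j = ((n : ℝ) - 1) * g i j := by
  simp [ricci13, constCurvatureTensor, sub_mul, sum_sub_distrib, sum_ite_eq']

theorem sum_sum_mul_eq_card (hsymm : ∀ i j, g i j = g j i)
    (hGg : ∀ i j, (∑ k, G i k * g k j) = if i = j then (1 : ℝ) else 0) :
    ∑ i, ∑ j, G i j * g i j = n := by
  have hdiag : ∀ i, ∑ j, G i j * g i j = 1 := fun i => by
    simpa only [hsymm _ i, if_pos] using hGg i i
  simp [hdiag]

theorem scalar13_constCurvatureTensor (hsymm : ∀ i j, g i j = g j i)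
    (hGg : ∀ i j, (∑ k, G i k * g k j) = if i = j then (1 : ℝ) else 0) :
    scalar13 G (constCurvatureTensor g) = n * ((n : ℝ) - 1) := by
  simp only [scalar13, ricci13_constCurvatureTensor, mul_left_comm (G _ _), ← mul_sum,
    sum_sum_mul_eq_card g G hsymm hGg]
  ring

theorem concirc13_constCurvatureTensor (hn : 2 ≤ n) (hsymm : ∀ i j, g i j = g j i)
    (hGg : ∀ i j, (∑ k, G i k * g k j) = if i = j then (1 : ℝ) else 0) :
    concirc13 g G (constCurvatureTensor g) = 0 := by
  have hn' : (2 : ℝ) ≤ n := by exact_mod_cast hn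
  have hne : (n : ℝ) * ((n : ℝ) - 1) ≠ 0 := mul_ne_zero (by linarith) (by linarith)
  funext h i j k
  simp only [concirc13, scalar13_constCurvatureTensor g G hsymm hGg, div_self hne, one_mul]
  exact sub_self _

end ConstCurvature

theorem stmt_13_general (n : ℕ) (hn : 2 ≤ n) (g G : Fin n → Fin n → ℝ)
    (hsymm : ∀ i j, g i j = g j i)
    (hGg : ∀ i j, (∑ k, G i k * g k j) = if i = j then (1 : ℝ) else 0)
    (Rbar : Fin n → Fin n → Fin n → Fin n → ℝ) (c : ℝ)
    (Rstar : Fin n → Fin n → Fin n → Fin n → ℝ)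
    (hRstar : ∀ h i j k, Rstar h i j k =
      Rbar h i j k + 2 * c *
        ((if h = k then (1 : ℝ) else 0) * g i j
          - (if h = j then (1 : ℝ) else 0) * g i k)) :
    ∀ h i j k, concirc13 g G Rstar h i j k = concirc13 g G Rbar h i j k := by
  have hshift : Rstar = Rbar + (2 * c) • constCurvatureTensor g := by
    funext h i j k
    exact hRstar h i j k
  rw [hshift, concirc13_add_smul, concirc13_constCurvatureTensor g G hn hsymm hGg, smul_zero,
    add_zero]
  exact fun _ _ _ _ => rfl

/-- Main result of Section 2: the concircular curvature tensor of the
semi-symmetric non-metric connection is invariant under concircular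
transformations, `Z̄*^h_{ijk} = Z̄^h_{ijk}`. -/
theorem stmt_13 (n : ℕ) (hn : 2 ≤ n) (g G : Fin n → Fin n → ℝ)
    (hsymm : ∀ i j, g i j = g j i)
    (hgG : ∀ i j, (∑ k, g i k * G k j) = if i = j then (1 : ℝ) else 0)
    (hGg : ∀ i j, (∑ k, G i k * g k j) = if i = j then (1 : ℝ) else 0)
    (Rbar : Fin n → Fin n → Fin n → Fin n → ℝ) (c : ℝ)
    (Rstar : Fin n → Fin n → Fin n → Fin n → ℝ)
    (hRstar : ∀ h i j k, Rstar h i j k =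
      Rbar h i j k + 2 * c *
        ((if h = k then (1 : ℝ) else 0) * g i j
          - (if h = j then (1 : ℝ) else 0) * g i k)) :
    ∀ h i j k, concirc13 g G Rstar h i j k = concirc13 g G Rbar h i j k :=
  stmt_13_general n hn g G hsymm hGg Rbar c Rstar hRstar
end
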